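/- In elliptic coordinates Z = 2√τ cosh(ξ+iη), Z' = 2√τ cosh(ξ'+iη'), with z = Z/√(2τ), z' = conj(Z')/√(2τ), one has |√(ω(√n Z)ω(√n Z'))·e^{nF(a⁻¹)}| = e^{−n(ξ−ξ_τ)²g(ξ+iη)}·e^{−n(ξ'−ξ_τ)²g(ξ'+iη')}, where F(a⁻¹) = 1 + log τ + ξ + ξ' + i(η'−η) + ½e^{−2(ξ+iη)} + ½e^{−2(ξ'−iη')} and g is the function defined by g(ξ+iη) = −G_η(ξ)/(ξ−ξ_τ)². -/

import Mathlib

/-- The elliptic Ginibre weight. -/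
noncomputable def wfun (τ : ℝ) (Z : ℂ) : ℝ :=
  Real.exp (-(Z.re) ^ 2 / (1 + τ) - (Z.im) ^ 2 / (1 - τ))

noncomputable def Gfun (τ η : ℝ) (ξ : ℝ) : ℝ :=
  1 / 2 + ξ - (-Real.log τ / 2) + Real.exp (-2 * ξ) * Real.cos (2 * η) / 2
    - 2 * τ * Real.cosh ξ ^ 2 * Real.cos η ^ 2 / (1 + τ)
    - 2 * τ * Real.sinh ξ ^ 2 * Real.sin η ^ 2 / (1 - τ)

/-- `g(ξ+iη) = -G_η(ξ)/(ξ-ξ_τ)²`. -/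
noncomputable def gfun (τ : ℝ) (ξ η : ℝ) : ℝ :=
  -Gfun τ η ξ / (ξ - (-Real.log τ / 2)) ^ 2

/-! Since `-n (ξ - ξ_τ)² g(ξ + iη) = n G_η(ξ)` (also at `ξ = ξ_τ`, where `G_η` vanishes), both sides
are exponentials of real numbers. The elliptic coordinates give `Re Z = 2√τ cosh ξ cos η` and
`Im Z = 2√τ sinh ξ sin η`, so `√ω(√n Z)` contributes the last two terms of `n G_η(ξ)`, while
`Re F(a⁻¹)` splits into the remaining terms of `G_η(ξ)` and of `G_η'(ξ')`. -/

open Complex in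
lemma cosh_add_mul_I_re (ξ η : ℝ) : (cosh (ξ + η * I)).re = Real.cosh ξ * Real.cos η := by
  simp [cosh_add, cosh_mul_I, sinh_mul_I, ← ofReal_cosh, ← ofReal_sinh, ← ofReal_cos,
    ← ofReal_sin]

open Complex in
lemma cosh_add_mul_I_im (ξ η : ℝ) : (cosh (ξ + η * I)).im = Real.sinh ξ * Real.sin η := by
  simp [cosh_add, cosh_mul_I, sinh_mul_I, ← ofReal_cosh, ← ofReal_sinh, ← ofReal_cos,
    ← ofReal_sin]

lemma cosh_sq_neg_log_div_two {τ : ℝ} (hτ : 0 < τ) :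
    Real.cosh (-Real.log τ / 2) ^ 2 = (τ + τ⁻¹ + 2) / 4 := by
  have h := Real.cosh_two_mul (-Real.log τ / 2)
  rw [show 2 * (-Real.log τ / 2) = -Real.log τ by ring, Real.cosh_neg, Real.cosh_log hτ,
    Real.sinh_sq] at h
  linarith

lemma sinh_sq_neg_log_div_two {τ : ℝ} (hτ : 0 < τ) :
    Real.sinh (-Real.log τ / 2) ^ 2 = (τ + τ⁻¹ - 2) / 4 := by
  rw [Real.sinh_sq, cosh_sq_neg_log_div_two hτ]
  ring

lemma Gfun_neg_log_div_two {τ : ℝ} (hτ0 : 0 < τ) (hτ1 : τ ≠ 1) (η : ℝ) :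
    Gfun τ η (-Real.log τ / 2) = 0 := by
  have h1 : 1 + τ ≠ 0 := by positivity
  have h2 : 1 - τ ≠ 0 := sub_ne_zero.mpr hτ1.symm
  have hexp : Real.exp (-2 * (-Real.log τ / 2)) = τ := by
    rw [show -2 * (-Real.log τ / 2) = Real.log τ by ring, Real.exp_log hτ0]
  rw [Gfun, hexp, cosh_sq_neg_log_div_two hτ0, sinh_sq_neg_log_div_two hτ0, Real.cos_two_mul',
    Real.cos_sq']
  field_simp
  ring

lemma neg_mul_sq_mul_gfun {τ : ℝ} (hτ0 : 0 < τ) (hτ1 : τ ≠ 1) (c ξ η : ℝ) :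
    -c * (ξ - (-Real.log τ / 2)) ^ 2 * gfun τ ξ η = c * Gfun τ η ξ := by
  rcases eq_or_ne ξ (-Real.log τ / 2) with rfl | hξ
  · simp [Gfun_neg_log_div_two hτ0 hτ1]
  · have : (ξ - (-Real.log τ / 2)) ^ 2 ≠ 0 := pow_ne_zero _ (sub_ne_zero.mpr hξ)
    rw [gfun, mul_div_assoc', div_eq_iff this]
    ring

lemma wfun_pos (τ : ℝ) (Z : ℂ) : 0 < wfun τ Z := Real.exp_pos _

lemma sqrt_wfun_sqrt_mul_elliptic {τ t : ℝ} (hτ : 0 ≤ τ) (ht : 0 ≤ t) (ξ η : ℝ) :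
    √(wfun τ (√t * (2 * √τ * Complex.cosh (ξ + η * Complex.I))))
      = Real.exp (t * (-2 * τ * Real.cosh ξ ^ 2 * Real.cos η ^ 2 / (1 + τ)
          - 2 * τ * Real.sinh ξ ^ 2 * Real.sin η ^ 2 / (1 - τ))) := by
  have hre : (√t * (2 * √τ * Complex.cosh (ξ + η * Complex.I)) : ℂ).re
      = √t * (2 * √τ * (Real.cosh ξ * Real.cos η)) := by
    simp [cosh_add_mul_I_re]
  have him : (√t * (2 * √τ * Complex.cosh (ξ + η * Complex.I)) : ℂ).im
      = √t * (2 * √τ * (Real.sinh ξ * Real.sin η)) := by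
    simp [cosh_add_mul_I_im]
  rw [wfun, ← Real.exp_half, hre, him]
  congr 1
  simp only [mul_pow, Real.sq_sqrt ht, Real.sq_sqrt hτ]
  ring

lemma re_Fainv (τ ξ ξ' η η' : ℝ) :
    (1 + Complex.log (τ : ℂ) + (ξ : ℂ) + (ξ' : ℂ) + ((η' : ℂ) - (η : ℂ)) * Complex.I
        + (1 / 2) * Complex.exp (-2 * ((ξ : ℂ) + (η : ℂ) * Complex.I))
        + (1 / 2) * Complex.exp (-2 * ((ξ' : ℂ) - (η' : ℂ) * Complex.I))).re
      = (1 / 2 + ξ - (-Real.log τ / 2) + Real.exp (-2 * ξ) * Real.cos (2 * η) / 2)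
        + (1 / 2 + ξ' - (-Real.log τ / 2) + Real.exp (-2 * ξ') * Real.cos (2 * η') / 2) := by
  simp only [one_div, neg_mul, Complex.add_re, Complex.one_re, Complex.log_ofReal_re,
    Complex.ofReal_re, Complex.mul_re, Complex.sub_re, Complex.I_re, mul_zero, Complex.sub_im,
    Complex.ofReal_im, sub_self, Complex.I_im, mul_one, add_zero, Complex.inv_re, Complex.re_ofNat,
    Complex.normSq_ofNat, div_self_mul_self', Complex.exp_re, Complex.neg_re, Complex.im_ofNat,
    Complex.add_im, Complex.mul_im, zero_add, zero_mul, sub_zero, Complex.neg_im, Real.cos_neg,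
    Complex.inv_im, neg_zero, zero_div, zero_sub, mul_neg, neg_neg]
  ring

theorem weight_times_eFainv_abs_general (τ : ℝ) (hτ0 : 0 < τ) (hτ1 : τ < 1)
    (n : ℕ) (ξ ξ' η η' : ℝ) (Z Z' Fainv : ℂ)
    (hZ : Z = 2 * (Real.sqrt τ : ℂ) * Complex.cosh ((ξ : ℂ) + (η : ℂ) * Complex.I))
    (hZ' : Z' = 2 * (Real.sqrt τ : ℂ) * Complex.cosh ((ξ' : ℂ) + (η' : ℂ) * Complex.I))
    (hF : Fainv = 1 + Complex.log (τ : ℂ) + (ξ : ℂ) + (ξ' : ℂ)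
        + ((η' : ℂ) - (η : ℂ)) * Complex.I
        + (1 / 2) * Complex.exp (-2 * ((ξ : ℂ) + (η : ℂ) * Complex.I))
        + (1 / 2) * Complex.exp (-2 * ((ξ' : ℂ) - (η' : ℂ) * Complex.I))) :
    Real.sqrt (wfun τ ((Real.sqrt n : ℂ) * Z) * wfun τ ((Real.sqrt n : ℂ) * Z'))
        * ‖Complex.exp ((n : ℂ) * Fainv)‖
      = Real.exp (-(n : ℝ) * (ξ - (-Real.log τ / 2)) ^ 2 * gfun τ ξ η)
        * Real.exp (-(n : ℝ) * (ξ' - (-Real.log τ / 2)) ^ 2 * gfun τ ξ' η') := by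
  subst hZ hZ' hF
  have hn : (0 : ℝ) ≤ n := n.cast_nonneg
  rw [neg_mul_sq_mul_gfun hτ0 hτ1.ne, neg_mul_sq_mul_gfun hτ0 hτ1.ne,
    Real.sqrt_mul (wfun_pos τ _).le, sqrt_wfun_sqrt_mul_elliptic hτ0.le hn,
    sqrt_wfun_sqrt_mul_elliptic hτ0.le hn, Complex.norm_exp, ← Complex.ofReal_natCast,
    Complex.re_ofReal_mul, re_Fainv,
    ← Real.exp_add, ← Real.exp_add, ← Real.exp_add, Gfun, Gfun]
  congr 1
  ring

theorem weight_times_eFainv_abs (τ : ℝ) (hτ0 : 0 < τ) (hτ1 : τ < 1)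
    (n : ℕ) (hn : 1 ≤ n) (ξ ξ' η η' : ℝ) (Z Z' z z' Fainv : ℂ)
    (hZ : Z = 2 * (Real.sqrt τ : ℂ) * Complex.cosh ((ξ : ℂ) + (η : ℂ) * Complex.I))
    (hZ' : Z' = 2 * (Real.sqrt τ : ℂ) * Complex.cosh ((ξ' : ℂ) + (η' : ℂ) * Complex.I))
    (hz : z = Z / (Real.sqrt (2 * τ) : ℂ))
    (hz' : z' = (starRingEnd ℂ) Z' / (Real.sqrt (2 * τ) : ℂ))
    (hF : Fainv = 1 + Complex.log (τ : ℂ) + (ξ : ℂ) + (ξ' : ℂ)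
        + ((η' : ℂ) - (η : ℂ)) * Complex.I
        + (1 / 2) * Complex.exp (-2 * ((ξ : ℂ) + (η : ℂ) * Complex.I))
        + (1 / 2) * Complex.exp (-2 * ((ξ' : ℂ) - (η' : ℂ) * Complex.I))) :
    Real.sqrt (wfun τ ((Real.sqrt n : ℂ) * Z) * wfun τ ((Real.sqrt n : ℂ) * Z'))
        * ‖Complex.exp ((n : ℂ) * Fainv)‖
      = Real.exp (-(n : ℝ) * (ξ - (-Real.log τ / 2)) ^ 2 * gfun τ ξ η)
        * Real.exp (-(n : ℝ) * (ξ' - (-Real.log τ / 2)) ^ 2 * gfun τ ξ' η') :=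
  weight_times_eFainv_abs_general τ hτ0 hτ1 n ξ ξ' η η' Z Z' Fainv hZ hZ' hF
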